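/- Let α ∈ (1, 2]. Then for all U, V ∈ ℝ^{m×n} and all c > 0, ‖U + V‖_F^α ≤ (1 + c)‖U‖_F^α + (2 + (α−1)^{α−1} c^{1−α})‖V‖_F^α. -/

import Mathlib

/-!
By the triangle inequality for the Frobenius norm it suffices to prove the scalar inequality
`(a + b)^α ≤ (1 + c) a^α + (1 + (α-1)^(α-1) c^(1-α)) b^α` for `a, b ≥ 0`. Convexity of `x ↦ x^α`
gives `(a + b)^α ≤ θ^(1-α) a^α + (1-θ)^(1-α) b^α` for every `θ ∈ (0, 1)`; with `β = α - 1 ∈ (0, 1]`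
and `θ = β / (β + c)` the two coefficients are `(1 + c/β)^β ≤ 1 + c` (Bernoulli) and
`(1 + β/c)^β ≤ 1 + (β/c)^β` (subadditivity of `x ↦ x^β`).
-/

open Matrix Kronecker

/-- Spectral norm: ℓ²→ℓ² operator norm of a real matrix. -/
noncomputable def specNorm {ι κ : Type*} [Fintype ι] [Fintype κ] [DecidableEq κ]
    (A : Matrix ι κ ℝ) : ℝ :=
  ‖LinearMap.toContinuousLinearMap (Matrix.toEuclideanLin A)‖

/-- Nuclear norm: trace of the positive semidefinite square root of `Aᵀ * A`. -/
noncomputable def nucNorm {ι κ : Type*} [Fintype ι] [Fintype κ] [DecidableEq κ]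
    (A : Matrix ι κ ℝ) : ℝ :=
  Matrix.trace ((Matrix.posSemidef_conjTranspose_mul_self A).1.eigenvectorUnitary.1 *
    diagonal (Real.sqrt ∘ (Matrix.posSemidef_conjTranspose_mul_self A).1.eigenvalues) *
    (star (Matrix.posSemidef_conjTranspose_mul_self A).1.eigenvectorUnitary : Matrix κ κ ℝ))

/-- Frobenius norm. -/
noncomputable def frobNorm {ι κ : Type*} [Fintype ι] [Fintype κ] (A : Matrix ι κ ℝ) : ℝ :=
  Real.sqrt (∑ i, ∑ j, (A i j) ^ 2)

/-- Trace inner product `⟨A, B⟩ = trace (Aᵀ B)`. -/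
noncomputable def tin {ι κ : Type*} [Fintype ι] [Fintype κ] (A B : Matrix ι κ ℝ) : ℝ :=
  Matrix.trace (Aᵀ * B)

/-- Vertical stacking of `N` matrices of size `m × n`. -/
def vstack {N m n : ℕ} (Y : Fin N → Matrix (Fin m) (Fin n) ℝ) :
    Matrix (Fin N × Fin m) (Fin n) ℝ :=
  fun p j => Y p.1 p.2 j

namespace Real

theorem add_rpow_le_weighted {p θ a b : ℝ} (hp : 1 ≤ p) (hθ₀ : 0 < θ) (hθ₁ : θ < 1)
    (ha : 0 ≤ a) (hb : 0 ≤ b) :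
    (a + b) ^ p ≤ θ ^ (1 - p) * a ^ p + (1 - θ) ^ (1 - p) * b ^ p := by
  have hθ' : 0 < 1 - θ := sub_pos.2 hθ₁
  have rescale : ∀ {t x : ℝ}, 0 < t → 0 ≤ x → t * (x / t) ^ p = t ^ (1 - p) * x ^ p := by
    intro t x ht hx
    rw [div_rpow hx ht.le, rpow_sub ht, rpow_one]
    ring
  have hconv := (convexOn_rpow hp).2 (Set.mem_Ici.2 (div_nonneg ha hθ₀.le))
    (Set.mem_Ici.2 (div_nonneg hb hθ'.le)) hθ₀.le hθ'.le (add_sub_cancel θ 1)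
  simp only [smul_eq_mul, mul_div_cancel₀ _ hθ₀.ne', mul_div_cancel₀ _ hθ'.ne'] at hconv
  rwa [rescale hθ₀ ha, rescale hθ' hb] at hconv

theorem add_rpow_le_one_add_mul_add {α c a b : ℝ} (hα₁ : 1 < α) (hα₂ : α ≤ 2) (hc : 0 < c)
    (ha : 0 ≤ a) (hb : 0 ≤ b) :
    (a + b) ^ α ≤ (1 + c) * a ^ α + (1 + (α - 1) ^ (α - 1) * c ^ (1 - α)) * b ^ α := by
  set β := α - 1
  have hβ₀ : 0 < β := sub_pos.2 hα₁
  have hβ₁ : β ≤ 1 := by linarith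
  have hneg : 1 - α = -β := by ring
  have hθ₀ : 0 < β / (β + c) := by positivity
  have hθ₁ : β / (β + c) < 1 := (div_lt_one (by positivity)).2 (by linarith)
  have hθ : (β / (β + c)) ^ (1 - α) = (1 + c / β) ^ β := by
    rw [hneg, rpow_neg hθ₀.le, ← inv_rpow hθ₀.le]
    congr 1
    field_simp
  have hθc : (1 - β / (β + c)) ^ (1 - α) = (1 + β / c) ^ β := by
    have : 0 < 1 - β / (β + c) := sub_pos.2 hθ₁
    rw [hneg, rpow_neg this.le, ← inv_rpow this.le]
    congr 1
    field_simp [hc.ne']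
    ring
  have hcoef_a : (1 + c / β) ^ β ≤ 1 + c :=
    (rpow_one_add_le_one_add_mul_self (by have := div_pos hc hβ₀; linarith) hβ₀.le hβ₁).trans_eq
      (by field_simp)
  have hcoef_b : (1 + β / c) ^ β ≤ 1 + β ^ β * c ^ (1 - α) := by
    calc (1 + β / c) ^ β ≤ 1 ^ β + (β / c) ^ β :=
          rpow_add_le_add_rpow zero_le_one (by positivity) hβ₀.le hβ₁
      _ = 1 + β ^ β * c ^ (1 - α) := by
          rw [one_rpow, div_rpow hβ₀.le hc.le, hneg, rpow_neg hc.le, div_eq_mul_inv]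
  calc (a + b) ^ α
      ≤ (β / (β + c)) ^ (1 - α) * a ^ α + (1 - β / (β + c)) ^ (1 - α) * b ^ α :=
        add_rpow_le_weighted hα₁.le hθ₀ hθ₁ ha hb
    _ ≤ (1 + c) * a ^ α + (1 + β ^ β * c ^ (1 - α)) * b ^ α := by
        rw [hθ, hθc]
        gcongr

end Real

section Frobenius

attribute [local instance] Matrix.frobeniusSeminormedAddCommGroup

variable {ι κ : Type*} [Fintype ι] [Fintype κ]

theorem frobNorm_eq_norm (A : Matrix ι κ ℝ) : frobNorm A = ‖A‖ := by
  simp only [frobNorm, frobenius_norm_def, Real.norm_eq_abs, Real.rpow_two, sq_abs,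
    Real.sqrt_eq_rpow]

theorem frobNorm_add_le (A B : Matrix ι κ ℝ) : frobNorm (A + B) ≤ frobNorm A + frobNorm B := by
  simpa only [frobNorm_eq_norm] using norm_add_le A B

end Frobenius

theorem stmt2 {m n : ℕ} (α : ℝ) (hα1 : 1 < α) (hα2 : α ≤ 2) :
    ∀ (U V : Matrix (Fin m) (Fin n) ℝ) (c : ℝ), 0 < c →
      frobNorm (U + V) ^ α
        ≤ (1 + c) * frobNorm U ^ α
          + (2 + (α - 1) ^ (α - 1) * c ^ (1 - α)) * frobNorm V ^ α := by
  intro U V c hc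
  have hU : 0 ≤ frobNorm U := Real.sqrt_nonneg _
  have hV : 0 ≤ frobNorm V := Real.sqrt_nonneg _
  calc frobNorm (U + V) ^ α
      ≤ (frobNorm U + frobNorm V) ^ α :=
        Real.rpow_le_rpow (Real.sqrt_nonneg _) (frobNorm_add_le U V) (by linarith)
    _ ≤ (1 + c) * frobNorm U ^ α + (1 + (α - 1) ^ (α - 1) * c ^ (1 - α)) * frobNorm V ^ α :=
        Real.add_rpow_le_one_add_mul_add hα1 hα2 hc hU hV
    _ ≤ _ := by gcongr; norm_num
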